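/- Let k ≥ 1, n = k+1, and let α be a partition with at most k parts each at most k+1. Then the multiset of arm–leg pairs, computed in SQ, of the cells of SQ on or below the diagonal equals the multiset of arm–leg pairs, computed in T, of the cells of T on or below the diagonal; that is, AL_{SQ}(p(SQ)) = AL_T(p(T)) as multisets of pairs. -/
import Mathlib


/-- The skew diagram with rows `a,…,b`, where row `i` contains the cells
`(i,j)` for `lo i ≤ j ≤ hi i`. -/
def skewD (a b : ℕ) (lo hi : ℕ → ℕ) : Finset (ℕ × ℕ) :=
  (Finset.Icc a b).biUnion fun i => (Finset.Icc (lo i) (hi i)).image fun j => (i, j)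

/-- Arm length: number of cells of `G` in the same row, strictly to the right. -/
def arm (G : Finset (ℕ × ℕ)) (x : ℕ × ℕ) : ℕ :=
  (G.filter fun y => y.1 = x.1 ∧ x.2 < y.2).card

/-- Leg length: number of cells of `G` in the same column, strictly below
(rows are numbered bottom to top). -/
def leg (G : Finset (ℕ × ℕ)) (x : ℕ × ℕ) : ℕ :=
  (G.filter fun y => y.2 = x.2 ∧ y.1 < x.1).card

/-- Multiset of arm–leg pairs of the cells of `E`, computed in `G`. -/
def AL (G E : Finset (ℕ × ℕ)) : Multiset (ℕ × ℕ) :=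
  E.val.map fun x => (arm G x, leg G x)

/-- Multiset of hook lengths of `G`. -/
def hookMS (G : Finset (ℕ × ℕ)) : Multiset ℕ :=
  G.val.map fun x => arm G x + leg G x + 1

/-- The skew diagram `T`. -/
def TT (n k : ℕ) (α : ℕ → ℕ) : Finset (ℕ × ℕ) :=
  skewD 1 k (fun i => α 1 - α i + 1) (fun i => n + α 1 - α i)

/-- The skew diagram `V`. -/
def VV (n k : ℕ) (α : ℕ → ℕ) : Finset (ℕ × ℕ) :=
  skewD (k + 1) (2 * k) (fun i => n + α 1 - α (i - k) + 1) (fun _ => n + α 1)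

/-- The skew diagram `SQ = T ∪ V`. -/
def SQ (n k : ℕ) (α : ℕ → ℕ) : Finset (ℕ × ℕ) :=
  TT n k α ∪ VV n k α

/-- The `k × n` rectangle `R`. -/
def RR (n k : ℕ) : Finset (ℕ × ℕ) :=
  skewD 1 k (fun _ => 1) (fun _ => n)

/-- The Young diagram `D` of `α`. -/
def DD (k : ℕ) (α : ℕ → ℕ) : Finset (ℕ × ℕ) :=
  skewD 1 k (fun _ => 1) (fun i => α (k + 1 - i))

/-- The 180° rotation `T*` of `T`. -/
def Tstar (n k : ℕ) (α : ℕ → ℕ) : Finset (ℕ × ℕ) :=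
  skewD 1 k (fun i => α (k + 1 - i) - α k + 1) (fun i => n + α (k + 1 - i) - α k)

lemma mem_skewD {a b : ℕ} {lo hi : ℕ → ℕ} {x : ℕ × ℕ} :
    x ∈ skewD a b lo hi ↔ a ≤ x.1 ∧ x.1 ≤ b ∧ lo x.1 ≤ x.2 ∧ x.2 ≤ hi x.1 := by
  obtain ⟨i, j⟩ := x
  simp only [skewD, Finset.mem_biUnion, Finset.mem_Icc, Finset.mem_image, Prod.mk.injEq]
  constructor
  · rintro ⟨i', ⟨h1, h2⟩, j', ⟨h3, h4⟩, rfl, rfl⟩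
    exact ⟨h1, h2, h3, h4⟩
  · rintro ⟨h1, h2, h3, h4⟩
    exact ⟨i, ⟨h1, h2⟩, j, ⟨h3, h4⟩, rfl, rfl⟩

lemma VV_row {n k : ℕ} {α : ℕ → ℕ} {y : ℕ × ℕ} (hy : y ∈ VV n k α) : k + 1 ≤ y.1 :=
  (mem_skewD.mp hy).1

lemma VV_diag {k : ℕ} {α : ℕ → ℕ} {y : ℕ × ℕ} (hy : y ∈ VV (k + 1) k α)
    (hk : 0 < k) (hα1 : α 1 ≤ k + 1)
    (hmono : ∀ i j, 1 ≤ i → i ≤ j → j ≤ k → α j ≤ α i) :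
    k + 1 + α 1 < y.1 + y.2 := by
  obtain ⟨h1, h2, h3, _⟩ := mem_skewD.mp hy
  have hik : 1 ≤ y.1 - k := by omega
  have hik2 : y.1 - k ≤ k := by omega
  have hle : α (y.1 - k) ≤ α 1 := hmono 1 (y.1 - k) le_rfl hik hik2
  omega

/-- For `n = k+1`, the arm–leg pairs of the cells of `SQ` on or below the
diagonal (computed in `SQ`) coincide with those of the cells of `T` on or
below the diagonal (computed in `T`). -/
theorem AL_pSQ_eq_AL_pT (k : ℕ) (α : ℕ → ℕ) (hk : 0 < k)
    (hα1 : α 1 ≤ k + 1) (hmono : ∀ i j, 1 ≤ i → i ≤ j → j ≤ k → α j ≤ α i) :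
    AL (SQ (k + 1) k α)
        ((SQ (k + 1) k α).filter fun x => x.1 + x.2 ≤ k + 1 + α 1) =
      AL (TT (k + 1) k α)
        ((TT (k + 1) k α).filter fun x => x.1 + x.2 ≤ k + 1 + α 1) := by
  have hset : ((SQ (k + 1) k α).filter fun x => x.1 + x.2 ≤ k + 1 + α 1)
      = ((TT (k + 1) k α).filter fun x => x.1 + x.2 ≤ k + 1 + α 1) := by
    rw [SQ, Finset.filter_union]
    have : ((VV (k + 1) k α).filter fun x => x.1 + x.2 ≤ k + 1 + α 1) = ∅ := by
      rw [Finset.filter_eq_empty_iff]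
      intro y hy
      have := VV_diag hy hk hα1 hmono
      omega
    rw [this, Finset.union_empty]
  rw [hset]
  unfold AL
  apply Multiset.map_congr rfl
  intro x hx
  rw [Finset.mem_val, Finset.mem_filter] at hx
  obtain ⟨hxT, _⟩ := hx
  have hx1 : x.1 ≤ k := (mem_skewD.mp hxT).2.1
  have harm : arm (SQ (k + 1) k α) x = arm (TT (k + 1) k α) x := by
    unfold arm SQ
    rw [Finset.filter_union]
    have : ((VV (k + 1) k α).filter fun y => y.1 = x.1 ∧ x.2 < y.2) = ∅ := by
      rw [Finset.filter_eq_empty_iff]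
      intro y hy
      have := VV_row hy
      intro h
      omega
    rw [this, Finset.union_empty]
  have hleg : leg (SQ (k + 1) k α) x = leg (TT (k + 1) k α) x := by
    unfold leg SQ
    rw [Finset.filter_union]
    have : ((VV (k + 1) k α).filter fun y => y.2 = x.2 ∧ y.1 < x.1) = ∅ := by
      rw [Finset.filter_eq_empty_iff]
      intro y hy
      have := VV_row hy
      intro h
      omega
    rw [this, Finset.union_empty]
  rw [harm, hleg]
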